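/- Let λ > 0 and set α_n = (2 log n)^{-1/2} and β_n = (2 log n)^{1/2} - (log log n + log π) / (2 (2 log n)^{1/2}) for n ≥ 2. Then for every real x, (F_λ(α_n x + β_n))^n → Λ(x) as n → ∞. -/

import Mathlib

open Real MeasureTheory Filter Topology

/-- Standard normal density. -/
noncomputable def stdPhi (x : ℝ) : ℝ := (Real.sqrt (2 * Real.pi))⁻¹ * Real.exp (-(x ^ 2) / 2)

/-- Standard normal cdf. -/
noncomputable def stdCdf (x : ℝ) : ℝ := ∫ t in Set.Iic x, stdPhi t

/-- Skew normal density with shape parameter l. -/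
noncomputable def snPdf (l x : ℝ) : ℝ := 2 * stdPhi x * stdCdf (l * x)

/-- Skew normal cdf with shape parameter l. -/
noncomputable def snCdf (l x : ℝ) : ℝ := ∫ t in Set.Iic x, snPdf l t

/-- Gumbel extreme value distribution function. -/
noncomputable def gumbel (x : ℝ) : ℝ := Real.exp (-Real.exp (-x))

/-!
Write `S(u) = ∫_u^∞ f_λ` for the skew normal tail, so that `F_λ(u_n)^n = (1 - S(u_n))^n` and it
suffices to show `n S(u_n) → e^{-x}`. Since `Φ` is increasing with values in `[0, 1]`,
`Φ(λu) · 2(1 - Φ(u)) ≤ S(u) ≤ 2(1 - Φ(u))`, and `Φ(λu) → 1` because `λ > 0`; together with Mills'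
ratio `1 - Φ(u) ~ φ(u)/u` this gives `S(u) ~ 2φ(u)/u`. Finally `u_n = √(2 log n) + d_n` with
`d_n → 0`, and `β_n` is chosen so that `n · 2φ(u_n)/u_n = e^{-x} e^{-d_n²/2} √(2 log n)/u_n`.
-/

open Set

lemma stdPhi_eq_gaussianPDFReal : stdPhi = ProbabilityTheory.gaussianPDFReal 0 1 := by
  ext x
  simp [stdPhi, ProbabilityTheory.gaussianPDFReal]

lemma stdPhi_pos (x : ℝ) : 0 < stdPhi x := by
  unfold stdPhi
  positivity

lemma stdPhi_neg (x : ℝ) : stdPhi (-x) = stdPhi x := by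
  simp [stdPhi]

lemma continuous_stdPhi : Continuous stdPhi := by
  unfold stdPhi
  fun_prop

lemma integrable_stdPhi : Integrable stdPhi := by
  rw [stdPhi_eq_gaussianPDFReal]
  exact ProbabilityTheory.integrable_gaussianPDFReal 0 1

lemma integral_stdPhi : ∫ x, stdPhi x = 1 := by
  rw [stdPhi_eq_gaussianPDFReal]
  exact ProbabilityTheory.integral_gaussianPDFReal_eq_one 0 one_ne_zero

lemma hasDerivAt_stdPhi (t : ℝ) : HasDerivAt stdPhi (-(t * stdPhi t)) t := by
  have h : HasDerivAt (fun s : ℝ => -(s ^ 2) / 2) (-t) t :=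
    ((hasDerivAt_pow 2 t).neg.div_const 2).congr_deriv (by norm_num; ring)
  exact ((h.exp).const_mul (√(2 * π))⁻¹).congr_deriv (by simp only [stdPhi]; ring)

lemma tendsto_stdPhi_atTop : Tendsto stdPhi atTop (𝓝 0) := by
  have h : Tendsto (fun s : ℝ => s ^ 2 / 2) atTop atTop :=
    (tendsto_pow_atTop two_ne_zero).atTop_div_const two_pos
  have := (tendsto_exp_neg_atTop_nhds_zero.comp h).const_mul (√(2 * π))⁻¹
  rw [mul_zero] at this
  exact this.congr fun s => by simp [stdPhi, neg_div]

lemma integrableOn_stdPhi_div_sq {u : ℝ} (hu : 0 < u) :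
    IntegrableOn (fun t => stdPhi t / t ^ 2) (Ioi u) := by
  refine (integrable_stdPhi.integrableOn.div_const (u ^ 2)).mono'
    ((continuous_stdPhi.measurable.div (measurable_id.pow_const 2)).aestronglyMeasurable) ?_
  rw [ae_restrict_iff' measurableSet_Ioi]
  refine ae_of_all _ fun t (ht : u < t) => ?_
  rw [Real.norm_of_nonneg (div_nonneg (stdPhi_pos t).le (sq_nonneg t))]
  gcongr
  exact (stdPhi_pos t).le

lemma integral_Ioi_stdPhi_add_integral_Ioi_div_sq {u : ℝ} (hu : 0 < u) :
    (∫ t in Ioi u, stdPhi t) + ∫ t in Ioi u, stdPhi t / t ^ 2 = stdPhi u / u := by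
  have hint := integrableOn_stdPhi_div_sq hu
  rw [← integral_add integrable_stdPhi.integrableOn hint]
  have hderiv : ∀ t ∈ Ici u,
      HasDerivAt (fun t => -(stdPhi t / t)) (stdPhi t + stdPhi t / t ^ 2) t := by
    intro t (ht : u ≤ t)
    have ht0 : t ≠ 0 := (hu.trans_le ht).ne'
    refine ((hasDerivAt_stdPhi t).div (hasDerivAt_id t) ht0).neg.congr_deriv ?_
    simp only [id]
    field_simp
    ring
  have hlim : Tendsto (fun t => -(stdPhi t / t)) atTop (𝓝 0) := by
    simpa [div_eq_mul_inv] using (tendsto_stdPhi_atTop.mul tendsto_inv_atTop_zero).neg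
  rw [integral_Ioi_of_hasDerivAt_of_tendsto' hderiv (integrable_stdPhi.integrableOn.add hint) hlim]
  ring

lemma integral_Ioi_stdPhi_le {u : ℝ} (hu : 0 < u) : ∫ t in Ioi u, stdPhi t ≤ stdPhi u / u := by
  have := setIntegral_nonneg (μ := volume) measurableSet_Ioi fun t (_ : t ∈ Ioi u) =>
    div_nonneg (stdPhi_pos t).le (sq_nonneg t)
  linarith [integral_Ioi_stdPhi_add_integral_Ioi_div_sq hu]

lemma stdPhi_div_le_integral_Ioi_stdPhi {u : ℝ} (hu : 0 < u) :
    stdPhi u / u ≤ (1 + (u ^ 2)⁻¹) * ∫ t in Ioi u, stdPhi t := by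
  have h : ∫ t in Ioi u, stdPhi t / t ^ 2 ≤ ∫ t in Ioi u, stdPhi t / u ^ 2 := by
    refine setIntegral_mono_on (integrableOn_stdPhi_div_sq hu)
      (integrable_stdPhi.integrableOn.div_const _) measurableSet_Ioi fun t (ht : u < t) => ?_
    gcongr
    exact (stdPhi_pos t).le
  rw [integral_div] at h
  have hsplit : (1 + (u ^ 2)⁻¹) * ∫ t in Ioi u, stdPhi t =
      (∫ t in Ioi u, stdPhi t) + (∫ t in Ioi u, stdPhi t) / u ^ 2 := by ring
  linarith [integral_Ioi_stdPhi_add_integral_Ioi_div_sq hu]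

lemma tendsto_integral_Ioi_stdPhi_div :
    Tendsto (fun u => (∫ t in Ioi u, stdPhi t) / (stdPhi u / u)) atTop (𝓝 1) := by
  have hlow : Tendsto (fun u : ℝ => (1 + (u ^ 2)⁻¹)⁻¹) atTop (𝓝 1) := by
    simpa using ((tendsto_inv_atTop_zero.comp (tendsto_pow_atTop (α := ℝ) two_ne_zero)).const_add
      1).inv₀ (by norm_num)
  refine tendsto_of_tendsto_of_tendsto_of_le_of_le' hlow tendsto_const_nhds ?_ ?_
  all_goals filter_upwards [eventually_gt_atTop 0] with u hu
  · rw [inv_le_iff_one_le_mul₀ (by positivity), div_mul_eq_mul_div,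
      one_le_div (div_pos (stdPhi_pos u) hu), mul_comm]
    exact stdPhi_div_le_integral_Ioi_stdPhi hu
  · exact div_le_one_of_le₀ (integral_Ioi_stdPhi_le hu) (div_pos (stdPhi_pos u) hu).le

lemma stdCdf_nonneg (x : ℝ) : 0 ≤ stdCdf x :=
  setIntegral_nonneg measurableSet_Iic fun t _ => (stdPhi_pos t).le

lemma stdCdf_le_one (x : ℝ) : stdCdf x ≤ 1 :=
  integral_stdPhi ▸
    setIntegral_le_integral integrable_stdPhi (ae_of_all _ fun t => (stdPhi_pos t).le)

lemma monotone_stdCdf : Monotone stdCdf := fun _ _ hab =>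
  setIntegral_mono_set integrable_stdPhi.integrableOn (ae_of_all _ fun t => (stdPhi_pos t).le)
    (ae_of_all _ (Iic_subset_Iic.2 hab))

lemma tendsto_stdCdf_atTop : Tendsto stdCdf atTop (𝓝 1) := by
  have := tendsto_setIntegral_of_monotone (μ := volume) (f := stdPhi) (fun _ => measurableSet_Iic)
    (fun _ _ h => Iic_subset_Iic.2 h) integrable_stdPhi.integrableOn
  rwa [iUnion_Iic, setIntegral_univ, integral_stdPhi] at this

lemma stdCdf_add_stdCdf_neg (x : ℝ) : stdCdf x + stdCdf (-x) = 1 := by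
  have h : stdCdf (-x) = ∫ t in Ioi x, stdPhi t := by
    simpa [stdCdf, stdPhi_neg] using integral_comp_neg_Iic (-x) stdPhi
  rw [h, ← integral_stdPhi]
  exact intervalIntegral.integral_Iic_add_Ioi integrable_stdPhi.integrableOn
    integrable_stdPhi.integrableOn

lemma snPdf_nonneg (l x : ℝ) : 0 ≤ snPdf l x := by
  unfold snPdf
  have := stdPhi_pos x
  have := stdCdf_nonneg (l * x)
  positivity

lemma snPdf_le (l x : ℝ) : snPdf l x ≤ 2 * stdPhi x :=
  mul_le_of_le_one_right (by linarith [stdPhi_pos x]) (stdCdf_le_one _)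

lemma snPdf_add_snPdf_neg (l x : ℝ) : snPdf l x + snPdf l (-x) = 2 * stdPhi x := by
  rw [snPdf, snPdf, stdPhi_neg, mul_neg, ← mul_add, stdCdf_add_stdCdf_neg, mul_one]

lemma integrable_snPdf (l : ℝ) : Integrable (snPdf l) := by
  refine (integrable_stdPhi.const_mul 2).mono' ?_ (ae_of_all _ fun x => ?_)
  · exact (((continuous_stdPhi.const_mul 2).measurable).mul
      (monotone_stdCdf.measurable.comp (measurable_const_mul l))).aestronglyMeasurable
  · rw [Real.norm_of_nonneg (snPdf_nonneg l x)]
    exact snPdf_le l x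

lemma integral_snPdf (l : ℝ) : ∫ x, snPdf l x = 1 := by
  have h := integral_add (integrable_snPdf l) (integrable_snPdf l).comp_neg
  simp only [snPdf_add_snPdf_neg, integral_const_mul, integral_stdPhi,
    integral_neg_eq_self (snPdf l)] at h
  linarith

lemma snCdf_eq_one_sub (l u : ℝ) : snCdf l u = 1 - ∫ t in Ioi u, snPdf l t := by
  rw [eq_sub_iff_add_eq, ← integral_snPdf l]
  exact intervalIntegral.integral_Iic_add_Ioi (integrable_snPdf l).integrableOn
    (integrable_snPdf l).integrableOn

lemma integral_Ioi_snPdf_le (l u : ℝ) :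
    ∫ t in Ioi u, snPdf l t ≤ 2 * ∫ t in Ioi u, stdPhi t := by
  rw [← integral_const_mul]
  exact setIntegral_mono (integrable_snPdf l).integrableOn
    (integrable_stdPhi.const_mul 2).integrableOn (snPdf_le l)

lemma stdCdf_mul_le_integral_Ioi_snPdf {l : ℝ} (hl : 0 ≤ l) (u : ℝ) :
    stdCdf (l * u) * (2 * ∫ t in Ioi u, stdPhi t) ≤ ∫ t in Ioi u, snPdf l t := by
  rw [← integral_const_mul, ← integral_const_mul]
  refine setIntegral_mono_on ((integrable_stdPhi.const_mul 2).const_mul _).integrableOn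
    (integrable_snPdf l).integrableOn measurableSet_Ioi fun t (ht : u < t) => ?_
  rw [snPdf, mul_comm]
  gcongr
  · linarith [stdPhi_pos t]
  · exact monotone_stdCdf (by gcongr)

lemma tendsto_integral_Ioi_snPdf_div {l : ℝ} (hl : 0 < l) :
    Tendsto (fun u => (∫ t in Ioi u, snPdf l t) / (2 * stdPhi u / u)) atTop (𝓝 1) := by
  have hlow := (tendsto_stdCdf_atTop.comp (tendsto_id.const_mul_atTop hl)).mul
    tendsto_integral_Ioi_stdPhi_div
  rw [one_mul] at hlow
  refine tendsto_of_tendsto_of_tendsto_of_le_of_le' hlow tendsto_integral_Ioi_stdPhi_div ?_ ?_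
  all_goals filter_upwards [eventually_gt_atTop 0] with u hu
  all_goals
    have hφ : 0 < 2 * (stdPhi u / u) := by have := stdPhi_pos u; positivity
    rw [mul_div_assoc, ← mul_div_mul_left _ (stdPhi u / u) two_ne_zero]
  · rw [Function.comp_apply, id, ← mul_div_assoc]
    exact div_le_div_of_nonneg_right (stdCdf_mul_le_integral_Ioi_snPdf hl.le u) hφ.le
  · exact div_le_div_of_nonneg_right (integral_Ioi_snPdf_le l u) hφ.le

/-- `α_n x + β_n` of the theorem, as a function of `L = log n`. -/
noncomputable def normingLevel (x L : ℝ) : ℝ :=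
  (√(2 * L))⁻¹ * x + (√(2 * L) - (log L + log π) / (2 * √(2 * L)))

noncomputable def normingLevelCorrection (x L : ℝ) : ℝ := (x - (log L + log π) / 2) / √(2 * L)

lemma normingLevel_eq (x : ℝ) {L : ℝ} (hL : 0 < L) :
    normingLevel x L = √(2 * L) + normingLevelCorrection x L := by
  have hs : 0 < √(2 * L) := by positivity
  unfold normingLevel normingLevelCorrection
  field_simp
  ring

lemma tendsto_sqrt_two_mul_atTop : Tendsto (fun L : ℝ => √(2 * L)) atTop atTop :=
  tendsto_sqrt_atTop.comp (tendsto_id.const_mul_atTop two_pos)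

lemma tendsto_normingLevelCorrection (x : ℝ) :
    Tendsto (normingLevelCorrection x) atTop (𝓝 0) := by
  have hlog : Tendsto (fun L => log L / √L) atTop (𝓝 0) :=
    (isLittleO_log_rpow_atTop (by norm_num : (0 : ℝ) < 1 / 2)).tendsto_div_nhds_zero.congr
      fun L => by rw [sqrt_eq_rpow]
  have h := ((tendsto_inv_atTop_zero.comp tendsto_sqrt_two_mul_atTop).const_mul
    (x - log π / 2)).sub (hlog.const_mul ((√2)⁻¹ / 2))
  rw [mul_zero, mul_zero, sub_zero] at h
  refine h.congr' ((eventually_gt_atTop 0).mono fun L hL => ?_)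
  have h2 : 0 < √2 := by positivity
  have hsL : 0 < √L := sqrt_pos.2 hL
  simp only [Function.comp_apply, normingLevelCorrection, sqrt_mul zero_le_two]
  field_simp
  ring

lemma tendsto_normingLevel_atTop (x : ℝ) : Tendsto (normingLevel x) atTop atTop :=
  (tendsto_sqrt_two_mul_atTop.atTop_add (tendsto_normingLevelCorrection x)).congr'
    ((eventually_gt_atTop 0).mono fun _ hL => (normingLevel_eq x hL).symm)

lemma exp_mul_stdPhi_normingLevel (x : ℝ) {L : ℝ} (hL : 0 < L) :
    exp L * stdPhi (normingLevel x L) =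
      exp (-x) * exp (-(normingLevelCorrection x L ^ 2 / 2)) * (√(2 * L) / 2) := by
  set d := normingLevelCorrection x L
  have hs2 : √(2 * L) ^ 2 = 2 * L := sq_sqrt (by positivity)
  have hsd : √(2 * L) * d = x - (log L + log π) / 2 := by
    have : 0 < √(2 * L) := by positivity
    simp only [d, normingLevelCorrection]
    field_simp
  have hexp : L + -(√(2 * L) + d) ^ 2 / 2 = -x + -(d ^ 2 / 2) + log (L * π) / 2 := by
    rw [log_mul hL.ne' pi_ne_zero]
    linear_combination (-1 / 2 : ℝ) * hs2 - hsd
  have hsqrt : √(L * π) = √(2 * L) * √(2 * π) / 2 := by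
    rw [← sqrt_mul (by positivity), show 2 * L * (2 * π) = 2 ^ 2 * (L * π) by ring,
      sqrt_mul (by positivity) (L * π), sqrt_sq zero_le_two]
    ring
  rw [normingLevel_eq x hL, stdPhi, mul_left_comm, ← exp_add, hexp, exp_add, exp_add,
    ← log_sqrt (by positivity), exp_log (by positivity), hsqrt]
  field_simp

lemma tendsto_exp_mul_stdPhi_div_normingLevel (x : ℝ) :
    Tendsto (fun L => exp L * (2 * stdPhi (normingLevel x L) / normingLevel x L)) atTop
      (𝓝 (exp (-x))) := by
  have hd := tendsto_normingLevelCorrection x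
  have hgauss : Tendsto (fun L => exp (-(normingLevelCorrection x L ^ 2 / 2))) atTop (𝓝 1) := by
    have h := ((hd.pow 2).div_const 2).neg
    rw [zero_pow two_ne_zero, zero_div, neg_zero] at h
    simpa using h.rexp
  have hratio : Tendsto (fun L => (1 + normingLevelCorrection x L / √(2 * L))⁻¹) atTop (𝓝 1) := by
    simpa [div_eq_mul_inv] using
      ((hd.mul (tendsto_inv_atTop_zero.comp tendsto_sqrt_two_mul_atTop)).const_add 1).inv₀
        (by norm_num)
  have h := (hgauss.const_mul (exp (-x))).mul hratio
  rw [mul_one, mul_one] at h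
  refine h.congr' ?_
  filter_upwards [eventually_gt_atTop 0, (tendsto_normingLevel_atTop x).eventually_gt_atTop 0]
    with L hL hu
  have hs : 0 < √(2 * L) := by positivity
  rw [mul_div_assoc', mul_left_comm, exp_mul_stdPhi_normingLevel x hL]
  rw [normingLevel_eq x hL] at hu ⊢
  field_simp

theorem skew_normal_max_gumbel_pos (l : ℝ) (hl : 0 < l) (x : ℝ) :
    Tendsto (fun n : ℕ =>
      (snCdf l ((Real.sqrt (2 * Real.log n))⁻¹ * x +
        (Real.sqrt (2 * Real.log n) -
          (Real.log (Real.log n) + Real.log Real.pi) /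
            (2 * Real.sqrt (2 * Real.log n))))) ^ n) atTop (𝓝 (gumbel x)) := by
  have hlog : Tendsto (fun n : ℕ => log n) atTop atTop :=
    tendsto_log_atTop.comp tendsto_natCast_atTop_atTop
  have hlevel := (tendsto_normingLevel_atTop x).comp hlog
  have htail : Tendsto (fun n : ℕ => n * ∫ t in Ioi (normingLevel x (log n)), snPdf l t) atTop
      (𝓝 (exp (-x))) := by
    have h := ((tendsto_integral_Ioi_snPdf_div hl).comp hlevel).mul
      ((tendsto_exp_mul_stdPhi_div_normingLevel x).comp hlog)
    rw [one_mul] at h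
    refine h.congr' ?_
    filter_upwards [eventually_gt_atTop 0, hlevel.eventually_gt_atTop 0] with n hn hu
    have := stdPhi_pos (normingLevel x (log n))
    simp only [Function.comp_apply, exp_log (Nat.cast_pos.2 hn)] at hu ⊢
    field_simp
  have h := tendsto_one_add_pow_exp_of_tendsto
    (g := fun n : ℕ => -∫ t in Ioi (normingLevel x (log n)), snPdf l t)
    (by simpa only [mul_neg] using htail.neg)
  simpa [normingLevel, snCdf_eq_one_sub, sub_eq_add_neg, gumbel] using h
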